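/- (No-Programming Theorem, part 2: program dimension bound.) Let d, d_P, N be positive integers. Let G be a unitary operator on ℂ^d ⊗ ℂ^{d_P} (realized as ℂ^(d×d_P)), let U_1, …, U_N be unitary d×d complex matrices that are pairwise distinct up to a global phase (for i ≠ j there is no c ∈ ℂ with U_i = c·U_j), and suppose there exist unit vectors P_1, …, P_N ∈ ℂ^{d_P} and vectors P_1', …, P_N' ∈ ℂ^{d_P} such that for every i and every ψ ∈ ℂ^d one has G(ψ ⊗ P_i) = (U_i ψ) ⊗ P_i'. Then the program register is at least N-dimensional: d_P ≥ N. -/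

import Mathlib

/-- The tensor product of a vector `ψ : ℂ^d` with a vector `φ : ℂ^m`,
realized as a vector indexed by `Fin d × Fin m` with entries `ψ a * φ b`. -/
noncomputable def tensorVec {d m : ℕ} (ψ : Fin d → ℂ) (φ : Fin m → ℂ) :
    Fin d × Fin m → ℂ := fun p => ψ p.1 * φ p.2

/-! Since `G` is unitary, comparing the inner products of `G (ψ ⊗ P i)` and `G (ψ ⊗ P j)` gives
`⟪ψ, (U i)ᴴ (U j) ψ⟫ ⟪P' i, P' j⟫ = ⟪ψ, ψ⟫ ⟪P i, P j⟫` for all `ψ`. If `⟪P i, P j⟫ ≠ 0`, then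
`(U i)ᴴ * U j` has a one-point numerical range, so, over `ℂ`, it is a scalar and `U j` is a phase
multiple of `U i`. Hence the programs `P i` are orthonormal, and there are at most `dP` of them. -/

open Matrix

theorem Matrix.eq_zero_of_forall_star_dotProduct_mulVec_self {n : Type*} [Fintype n]
    [DecidableEq n] (A : Matrix n n ℂ) (h : ∀ v, star v ⬝ᵥ A *ᵥ v = 0) : A = 0 := by
  have hlin : toEuclideanLin A = 0 := (inner_map_self_eq_zero _).1 fun x => by
    rw [← inner_conj_symm, EuclideanSpace.inner_eq_star_dotProduct, ofLp_toLpLin, toLin'_apply,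
      dotProduct_comm, h, map_zero]
  exact toEuclideanLin.injective (hlin.trans (map_zero _).symm)

theorem Matrix.eq_smul_one_of_forall_star_dotProduct_mulVec_self {n : Type*} [Fintype n]
    [DecidableEq n] (A : Matrix n n ℂ) (c : ℂ) (h : ∀ v, star v ⬝ᵥ A *ᵥ v = c * (star v ⬝ᵥ v)) :
    A = c • 1 :=
  sub_eq_zero.1 <| eq_zero_of_forall_star_dotProduct_mulVec_self _ fun v => by
    rw [sub_mulVec, smul_mulVec, one_mulVec, dotProduct_sub, dotProduct_smul, h, smul_eq_mul,
      sub_self]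

theorem linearIndependent_of_ne_zero_of_star_dotProduct_eq_zero {𝕜 ι n : Type*} [RCLike 𝕜]
    [Fintype n] {v : ι → n → 𝕜} (hz : ∀ i, v i ≠ 0)
    (ho : Pairwise fun i j => star (v i) ⬝ᵥ v j = 0) : LinearIndependent 𝕜 v := by
  have : LinearIndependent 𝕜 fun i => WithLp.toLp 2 (v i) :=
    linearIndependent_of_ne_zero_of_inner_eq_zero (fun i => by simpa using hz i)
      fun i j hij => by dsimp only; rw [EuclideanSpace.inner_toLp_toLp, dotProduct_comm, ho hij]
  exact this.map' (WithLp.linearEquiv 2 𝕜 (n → 𝕜)).toLinearMap (LinearEquiv.ker _)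

theorem star_tensorVec_dotProduct_tensorVec {d m : ℕ} (ψ ψ' : Fin d → ℂ) (φ φ' : Fin m → ℂ) :
    star (tensorVec ψ φ) ⬝ᵥ tensorVec ψ' φ' = (star ψ ⬝ᵥ ψ') * (star φ ⬝ᵥ φ') := by
  simp only [dotProduct, tensorVec, Pi.star_apply, star_mul', Fintype.sum_prod_type,
    Finset.sum_mul_sum]
  exact Finset.sum_congr rfl fun a _ => Finset.sum_congr rfl fun b _ => by ring

theorem Matrix.star_mulVec_dotProduct_mulVec_of_mem_unitaryGroup {n : Type*} [Fintype n]
    [DecidableEq n] {A : Matrix n n ℂ} (hA : A ∈ unitaryGroup n ℂ) (x y : n → ℂ) :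
    star (A *ᵥ x) ⬝ᵥ A *ᵥ y = star x ⬝ᵥ y := by
  rw [star_mulVec, dotProduct_mulVec, vecMul_vecMul, ← star_eq_conjTranspose, hA.1, vecMul_one]

section Processor

variable {d m : ℕ} {G : Matrix (Fin d × Fin m) (Fin d × Fin m) ℂ} {A B : Matrix (Fin d) (Fin d) ℂ}
  {p q p' q' : Fin m → ℂ}

theorem star_dotProduct_mul_eq_of_processor (hG : G ∈ unitaryGroup (Fin d × Fin m) ℂ)
    (hp : ∀ ψ, G *ᵥ tensorVec ψ p = tensorVec (A *ᵥ ψ) p')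
    (hq : ∀ ψ, G *ᵥ tensorVec ψ q = tensorVec (B *ᵥ ψ) q') (ψ : Fin d → ℂ) :
    (star ψ ⬝ᵥ (Aᴴ * B) *ᵥ ψ) * (star p' ⬝ᵥ q') = (star ψ ⬝ᵥ ψ) * (star p ⬝ᵥ q) := by
  have h := star_mulVec_dotProduct_mulVec_of_mem_unitaryGroup hG (tensorVec ψ p) (tensorVec ψ q)
  rwa [hp, hq, star_tensorVec_dotProduct_tensorVec, star_tensorVec_dotProduct_tensorVec,
    star_mulVec, ← dotProduct_mulVec, mulVec_mulVec] at h

theorem star_dotProduct_eq_zero_of_processor (hd : 0 < d)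
    (hG : G ∈ unitaryGroup (Fin d × Fin m) ℂ) (hA : A ∈ unitaryGroup (Fin d) ℂ)
    (hAB : ∀ c : ℂ, B ≠ c • A)
    (hp : ∀ ψ, G *ᵥ tensorVec ψ p = tensorVec (A *ᵥ ψ) p')
    (hq : ∀ ψ, G *ᵥ tensorVec ψ q = tensorVec (B *ᵥ ψ) q') :
    star p ⬝ᵥ q = 0 := by
  by_contra hpq
  have key := star_dotProduct_mul_eq_of_processor hG hp hq
  have hp'q' : star p' ⬝ᵥ q' ≠ 0 := fun h0 => hpq <| by
    simpa [h0] using (key (Pi.single ⟨0, hd⟩ 1)).symm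
  have hscalar : Aᴴ * B = (star p ⬝ᵥ q / star p' ⬝ᵥ q') • 1 :=
    eq_smul_one_of_forall_star_dotProduct_mulVec_self _ _ fun ψ => by
      rw [div_mul_eq_mul_div, eq_div_iff hp'q', key, mul_comm]
  apply hAB (star p ⬝ᵥ q / star p' ⬝ᵥ q')
  rw [← one_mul B, ← mem_unitaryGroup_iff.1 hA, mul_assoc, star_eq_conjTranspose, hscalar,
    mul_smul_comm, mul_one]

end Processor

theorem no_programming_dimension_general
    (d dP N : ℕ) (hd : 0 < d)
    (G : Matrix (Fin d × Fin dP) (Fin d × Fin dP) ℂ)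
    (hG : G ∈ Matrix.unitaryGroup (Fin d × Fin dP) ℂ)
    (U : Fin N → Matrix (Fin d) (Fin d) ℂ)
    (hU : ∀ i, U i ∈ Matrix.unitaryGroup (Fin d) ℂ)
    (hdistinct : ∀ i j, i ≠ j → ∀ c : ℂ, U i ≠ c • U j)
    (P P' : Fin N → (Fin dP → ℂ))
    (hPunit : ∀ i, ∑ a, star (P i a) * P i a = 1)
    (hproc : ∀ i (ψ : Fin d → ℂ),
      G.mulVec (tensorVec ψ (P i)) = tensorVec ((U i).mulVec ψ) (P' i)) :
    N ≤ dP := by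
  have horth : Pairwise fun i j => star (P i) ⬝ᵥ P j = 0 := fun i j hij =>
    star_dotProduct_eq_zero_of_processor hd hG (hU i) (hdistinct j i hij.symm) (hproc i) (hproc j)
  have hne : ∀ i, P i ≠ 0 := fun i hi => by simpa [hi] using hPunit i
  simpa using
    (linearIndependent_of_ne_zero_of_star_dotProduct_eq_zero hne horth).fintype_card_le_finrank

/-- No-Programming Theorem, part 2: the program register is at least `N`-dimensional. -/
theorem no_programming_dimension
    (d dP N : ℕ) (hd : 0 < d) (hdP : 0 < dP) (hN : 0 < N)
    (G : Matrix (Fin d × Fin dP) (Fin d × Fin dP) ℂ)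
    (hG : G ∈ Matrix.unitaryGroup (Fin d × Fin dP) ℂ)
    (U : Fin N → Matrix (Fin d) (Fin d) ℂ)
    (hU : ∀ i, U i ∈ Matrix.unitaryGroup (Fin d) ℂ)
    (hdistinct : ∀ i j, i ≠ j → ∀ c : ℂ, U i ≠ c • U j)
    (P P' : Fin N → (Fin dP → ℂ))
    (hPunit : ∀ i, ∑ a, star (P i a) * P i a = 1)
    (hproc : ∀ i (ψ : Fin d → ℂ),
      G.mulVec (tensorVec ψ (P i)) = tensorVec ((U i).mulVec ψ) (P' i)) :
    N ≤ dP :=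
  no_programming_dimension_general d dP N hd G hG U hU hdistinct P P' hPunit hproc
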